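/- arXiv:1112.1824 — 9 statements merged into one kernel-verified Lean document; each statement's English description precedes it below -/
import Mathlib

section
/- A metrizable locally convex space has the countable neighbourhood property if and only if it is normable. -/
/-!
A continuous seminorm is controlled by any seminorm whose unit ball lies inside its own unit
ball, so in a locally convex space with a countable basis of neighbourhoods of `0` the gauges
`p n` of a countable basis of absolutely convex open neighbourhoods dominate every continuous
seminorm. An upper bound `q` of the `p n` given by the cnp then dominates every continuous
seminorm too; since these separate points, `q` is a norm.
-/

open Topology

/-- A locally convex space `E` has the *countable neighbourhood property* (cnp) if every
countable family of continuous seminorms on `E` has an upper bound in the pre-order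
`p ⪯ q ⟺ ∃ C > 0, p ≤ C·q`. -/
def CountableNeighbourhoodProperty (E : Type*)
    [AddCommGroup E] [Module ℝ E] [TopologicalSpace E] : Prop :=
  ∀ p : ℕ → Seminorm ℝ E, (∀ n, Continuous (p n)) →
    ∃ q : Seminorm ℝ E, Continuous q ∧
      ∀ n, ∃ C : ℝ, 0 < C ∧ ∀ x, p n x ≤ C * q x

theorem Seminorm.le_of_ball_zero_one_subset {E : Type*} [AddCommGroup E] [Module ℝ E]
    {p q : Seminorm ℝ E} (h : p.ball 0 1 ⊆ q.ball 0 1) : q ≤ p := fun x => by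
  rw [← p.gauge_ball, ← q.gauge_ball]
  exact gauge_mono (p.absorbent_ball_zero one_pos) h x

section LocallyConvex

variable {E : Type*} [AddCommGroup E] [Module ℝ E] [TopologicalSpace E]
  [IsTopologicalAddGroup E] [ContinuousSMul ℝ E] [LocallyConvexSpace ℝ E]

theorem exists_continuous_seminorm_ball_subset {U : Set E} (hU : U ∈ 𝓝 0) :
    ∃ p : Seminorm ℝ E, Continuous p ∧ p.ball 0 1 ⊆ U := by
  obtain ⟨V, hV, hVU⟩ := (nhds_hasBasis_absConvex_open ℝ E).mem_iff.mp hU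
  let s : AbsConvexOpenSets ℝ E := ⟨V, hV⟩
  refine ⟨gaugeSeminormFamily ℝ E s, with_gaugeSeminormFamily.continuous_seminorm s, ?_⟩
  rwa [gaugeSeminormFamily_ball]

theorem exists_continuous_seminorm_one_le [T1Space E] {x : E} (hx : x ≠ 0) :
    ∃ p : Seminorm ℝ E, Continuous p ∧ 1 ≤ p x := by
  obtain ⟨p, hp, hpx⟩ :=
    exists_continuous_seminorm_ball_subset (isOpen_compl_singleton.mem_nhds hx.symm)
  exact ⟨p, hp, not_lt.mp fun hlt => hpx (p.mem_ball_zero.mpr hlt) rfl⟩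

theorem exists_seq_continuous_seminorm_cofinal [FirstCountableTopology E] :
    ∃ p : ℕ → Seminorm ℝ E, (∀ n, Continuous (p n)) ∧
      ∀ r : Seminorm ℝ E, Continuous r → ∃ n, r ≤ p n := by
  obtain ⟨b, hb⟩ := (𝓝 (0 : E)).exists_antitone_basis
  choose p hp hpb using fun n => exists_continuous_seminorm_ball_subset (hb.mem n)
  refine ⟨p, hp, fun r hr => ?_⟩
  obtain ⟨n, -, hn⟩ := hb.toHasBasis.mem_iff.mp (r.ball_mem_nhds hr one_pos)
  exact ⟨n, Seminorm.le_of_ball_zero_one_subset ((hpb n).trans hn)⟩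

end LocallyConvex

theorem metrizable_cnp_iff_normable_general {E : Type*}
    [AddCommGroup E] [Module ℝ E] [TopologicalSpace E]
    [IsTopologicalAddGroup E] [ContinuousSMul ℝ E] [LocallyConvexSpace ℝ E]
    [TopologicalSpace.MetrizableSpace E] :
    CountableNeighbourhoodProperty E ↔
      ∃ N : Seminorm ℝ E, Continuous N ∧ (∀ x, N x = 0 → x = 0) ∧
        ∀ p : Seminorm ℝ E, Continuous p → ∃ C : ℝ, 0 < C ∧ ∀ x, p x ≤ C * N x := by
  refine ⟨fun hcnp => ?_, fun ⟨N, hN, _, hdom⟩ p hp => ⟨N, hN, fun n => hdom (p n) (hp n)⟩⟩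
  obtain ⟨p, hp, hcofinal⟩ := exists_seq_continuous_seminorm_cofinal (E := E)
  obtain ⟨q, hq, hpq⟩ := hcnp p hp
  have hdom : ∀ r : Seminorm ℝ E, Continuous r → ∃ C : ℝ, 0 < C ∧ ∀ x, r x ≤ C * q x := by
    intro r hr
    obtain ⟨n, hrn⟩ := hcofinal r hr
    obtain ⟨C, hC, hpnq⟩ := hpq n
    exact ⟨C, hC, fun x => (hrn x).trans (hpnq x)⟩
  refine ⟨q, hq, fun x hqx => ?_, hdom⟩
  by_contra hx
  obtain ⟨r, hr, hrx⟩ := exists_continuous_seminorm_one_le hx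
  obtain ⟨C, -, hrq⟩ := hdom r hr
  linarith [hrq x, show C * q x = 0 by rw [hqx, mul_zero]]

/-- A metrizable locally convex space has the countable neighbourhood property if and
only if it is normable, i.e. there is a continuous norm `N` on `E` defining the
topology (equivalently: dominating every continuous seminorm). -/
theorem metrizable_cnp_iff_normable {E : Type*}
    [AddCommGroup E] [Module ℝ E] [TopologicalSpace E]
    [IsTopologicalAddGroup E] [ContinuousSMul ℝ E] [LocallyConvexSpace ℝ E] [T2Space E]
    [TopologicalSpace.MetrizableSpace E] :
    CountableNeighbourhoodProperty E ↔
      ∃ N : Seminorm ℝ E, Continuous N ∧ (∀ x, N x = 0 → x = 0) ∧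
        ∀ p : Seminorm ℝ E, Continuous p → ∃ C : ℝ, 0 < C ∧ ∀ x, p x ≤ C * N x :=
  metrizable_cnp_iff_normable_general
end

section
/- If E has the θ-neighbourhood property for an infinite cardinal θ and F ⊆ E is a closed vector subspace, then the quotient space E/F has the θ-neighbourhood property. -/
/-!
Pull the family back along `π : E → E ⧸ F` and bound it there by one continuous seminorm `q`.
Push `q` forward as the gauge of `π '' q.ball 0 1`: this set is balanced, convex and absorbent,
and open because `π` is an open map, so its gauge is a continuous seminorm on `E ⧸ F`. If
`p ∘ π ≤ C • q`, the set lies in `p.ball 0 C`, which gives `p ≤ C • gauge`.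
-/

universe u

/-- A locally convex space `E` has the *θ-neighbourhood property* for a cardinal `θ` if
every set `M` of continuous seminorms on `E` with `#M ≤ θ` has an upper bound in the
pre-order `p ⪯ q ⟺ ∃ C > 0, p ≤ C·q`. -/
def ThetaNeighbourhoodProperty (θ : Cardinal.{u}) (E : Type u)
    [AddCommGroup E] [Module ℝ E] [TopologicalSpace E] : Prop :=
  ∀ M : Set (Seminorm ℝ E), (∀ p ∈ M, Continuous p) → Cardinal.mk M ≤ θ →
    ∃ q : Seminorm ℝ E, Continuous q ∧
      ∀ p ∈ M, ∃ C : ℝ, 0 < C ∧ ∀ x, p x ≤ C * q x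

open Pointwise

section

variable {𝕜 E F : Type*} [SeminormedRing 𝕜] [AddCommGroup E] [Module 𝕜 E]
  [AddCommGroup F] [Module 𝕜 F] {s : Set E}

theorem Balanced.linear_image (hs : Balanced 𝕜 s) (f : E →ₗ[𝕜] F) : Balanced 𝕜 (f '' s) :=
  fun a ha => by
    rw [← image_smul_set]
    exact Set.image_mono (hs a ha)

theorem Absorbent.linear_image (hs : Absorbent 𝕜 s) {f : E →ₗ[𝕜] F}
    (hf : Function.Surjective f) : Absorbent 𝕜 (f '' s) := by
  intro x
  obtain ⟨y, rfl⟩ := hf x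
  filter_upwards [hs y] with a ha
  rw [← image_smul_set, Set.singleton_subset_iff]
  exact Set.mem_image_of_mem f (ha rfl)

end

namespace Seminorm

variable {E : Type*} [AddCommGroup E] [Module ℝ E]

theorem le_mul_gauge_of_subset_ball {p : Seminorm ℝ E} {s : Set E} {C : ℝ} (hs : Absorbent ℝ s)
    (hC : 0 < C) (h : s ⊆ p.ball 0 C) (x : E) : p x ≤ C * gauge s x := by
  have hball : p.ball 0 C = C • p.ball 0 1 := by
    rw [smul_ball_zero hC.ne', Real.norm_of_nonneg hC.le, mul_one]
  have hgauge := gauge_mono hs (h.trans_eq hball) x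
  rw [gauge_smul_left_of_nonneg hC.le, p.gauge_ball, Pi.smul_apply, smul_eq_mul] at hgauge
  rwa [inv_mul_le_iff₀ hC] at hgauge

variable (q : Seminorm ℝ E) (F : Submodule ℝ E)

noncomputable def quotient : Seminorm ℝ (E ⧸ F) :=
  gaugeSeminorm ((q.balanced_ball_zero 1).linear_image F.mkQ)
    ((q.convex_ball 0 1).linear_image F.mkQ)
    ((q.absorbent_ball_zero one_pos).linear_image F.mkQ_surjective)

theorem le_mul_quotient {p : Seminorm ℝ (E ⧸ F)} {C : ℝ} (hC : 0 < C)
    (h : ∀ y, p (F.mkQ y) ≤ C * q y) (x : E ⧸ F) : p x ≤ C * q.quotient F x := by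
  refine le_mul_gauge_of_subset_ball
    ((q.absorbent_ball_zero one_pos).linear_image F.mkQ_surjective) hC ?_ x
  rintro _ ⟨y, hy, rfl⟩
  rw [mem_ball_zero] at hy ⊢
  calc p (F.mkQ y) ≤ C * q y := h y
    _ < C := mul_lt_of_lt_one_right hC hy

variable [TopologicalSpace E] [IsTopologicalAddGroup E] [ContinuousSMul ℝ E]

theorem continuous_quotient (hq : Continuous q) : Continuous (q.quotient F) := by
  have hball : IsOpen (q.ball 0 1) := by
    rw [ball_zero_eq]
    exact isOpen_lt hq continuous_const
  exact continuous_gauge ((q.convex_ball 0 1).linear_image F.mkQ)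
    ((F.isOpenMap_mkQ _ hball).mem_nhds ⟨0, q.mem_ball_self one_pos, map_zero _⟩)

end Seminorm

theorem quotient_thetaNP_general {E : Type u}
    [AddCommGroup E] [Module ℝ E] [TopologicalSpace E]
    [IsTopologicalAddGroup E] [ContinuousSMul ℝ E]
    (θ : Cardinal.{u})
    (hE : ThetaNeighbourhoodProperty θ E)
    (F : Submodule ℝ E) :
    ThetaNeighbourhoodProperty θ (E ⧸ F) := by
  intro M hM hMθ
  obtain ⟨q, hq, hqM⟩ := hE ((fun p => p.comp F.mkQ) '' M)
    (Set.forall_mem_image.2 fun p hp => (hM p hp).comp F.continuous_mkQ)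
    (Cardinal.mk_image_le.trans hMθ)
  refine ⟨q.quotient F, q.continuous_quotient F hq, fun p hp => ?_⟩
  obtain ⟨C, hC, hpq⟩ := hqM _ (Set.mem_image_of_mem _ hp)
  exact ⟨C, hC, q.le_mul_quotient F hC hpq⟩

/-- If a locally convex space `E` has the θ-neighbourhood property for an infinite
cardinal θ and `F ⊆ E` is a closed vector subspace, then the quotient `E ⧸ F`
(with the quotient topology) has the θ-neighbourhood property. -/
theorem quotient_thetaNP {E : Type u}
    [AddCommGroup E] [Module ℝ E] [TopologicalSpace E]
    [IsTopologicalAddGroup E] [ContinuousSMul ℝ E] [LocallyConvexSpace ℝ E] [T2Space E]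
    (θ : Cardinal.{u}) (hθ : Cardinal.aleph0 ≤ θ)
    (hE : ThetaNeighbourhoodProperty θ E)
    (F : Submodule ℝ E) (hF : IsClosed (F : Set E)) :
    ThetaNeighbourhoodProperty θ (E ⧸ F) :=
  quotient_thetaNP_general θ hE F
end

section
/- Let E₁, E₂, F be locally convex spaces and β : E₁ × E₂ → F be a continuous bilinear map. If F has the countable neighbourhood property, then β admits product estimates. -/
/-- A bilinear map (given as a function) `β : E₁ × E₂ → F` *admits product estimates*
if for every double sequence `(p i j)` of continuous seminorms on `F` there exist
sequences `(P i)`, `(Q j)` of continuous seminorms on `E₁`, `E₂` with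
`p i j (β x y) ≤ P i x * Q j y` for all `i, j, x, y`. -/
def ProductEstimates {E₁ E₂ F : Type*}
    [AddCommGroup E₁] [Module ℝ E₁] [TopologicalSpace E₁]
    [AddCommGroup E₂] [Module ℝ E₂] [TopologicalSpace E₂]
    [AddCommGroup F] [Module ℝ F] [TopologicalSpace F]
    (β : E₁ → E₂ → F) : Prop :=
  ∀ p : ℕ → ℕ → Seminorm ℝ F, (∀ i j, Continuous (p i j)) →
    ∃ (P : ℕ → Seminorm ℝ E₁) (Q : ℕ → Seminorm ℝ E₂),
      (∀ i, Continuous (P i)) ∧ (∀ j, Continuous (Q j)) ∧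
      ∀ (i j : ℕ) (x : E₁) (y : E₂), p i j (β x y) ≤ P i x * Q j y

/-!
Continuity of `β` at the origin gives, for a single continuous seminorm `q` on `F`, an
estimate `q (β x y) ≤ P x * Q y`. The countable neighbourhood property dominates all `p i j`
by one such `q`, say `p i j ≤ C i j • q`, and it remains to split the constants as
`C i j ≤ M i * M j`. For this take `M n = 1 + ∑_{k, l ≤ n} (C k l)⁺`, which is monotone and at
least `1`, so that `C i j ≤ M (max i j) = max (M i) (M j) ≤ M i * M j`.
-/

open Filter Topology Finset
open scoped NNReal

theorem exists_nnreal_le_mul (C : ℕ → ℕ → ℝ) : ∃ M : ℕ → ℝ≥0, ∀ i j, C i j ≤ M i * M j := by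
  let M : ℕ → ℝ≥0 := fun n =>
    1 + ∑ k ∈ range (n + 1) ×ˢ range (n + 1), (C k.1 k.2).toNNReal
  have one_le (n : ℕ) : 1 ≤ M n := le_self_add
  have mono : Monotone M := fun m n hmn =>
    add_le_add le_rfl <| sum_le_sum_of_subset <| product_subset_product
      (range_subset_range.2 (by omega)) (range_subset_range.2 (by omega))
  refine ⟨M, fun i j => ?_⟩
  have le_max : (C i j).toNNReal ≤ M (max i j) :=
    le_add_left <| single_le_sum (f := fun k : ℕ × ℕ => (C k.1 k.2).toNNReal)
      (fun _ _ => zero_le)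
      (show (i, j) ∈ _ from mem_product.2 ⟨by simp, by simp⟩)
  have max_le_mul : M (max i j) ≤ M i * M j := by
    rw [mono.map_max]
    exact max_le (le_mul_of_one_le_right' (one_le j)) (le_mul_of_one_le_left' (one_le i))
  calc C i j ≤ (C i j).toNNReal := Real.le_coe_toNNReal _
    _ ≤ ((M i * M j : ℝ≥0) : ℝ) := NNReal.coe_le_coe.2 (le_max.trans max_le_mul)
    _ = M i * M j := NNReal.coe_mul _ _

theorem Seminorm.exists_continuous_ball_subset {E : Type*} [AddCommGroup E] [Module ℝ E]
    [TopologicalSpace E] [IsTopologicalAddGroup E] [ContinuousSMul ℝ E]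
    [LocallyConvexSpace ℝ E] {U : Set E} (hU : U ∈ 𝓝 0) :
    ∃ p : Seminorm ℝ E, Continuous p ∧ p.ball 0 1 ⊆ U := by
  obtain ⟨V, hV, hVU⟩ := (nhds_hasBasis_absConvex_open ℝ E).mem_iff.1 hU
  let s : AbsConvexOpenSets ℝ E := ⟨V, hV⟩
  exact ⟨gaugeSeminormFamily ℝ E s, with_gaugeSeminormFamily.continuous_seminorm s,
    (gaugeSeminormFamily_ball s).trans_subset hVU⟩

section Bilinear

variable {E₁ E₂ F : Type*} [AddCommGroup E₁] [Module ℝ E₁] [AddCommGroup E₂] [Module ℝ E₂]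
  [AddCommGroup F] [Module ℝ F]

theorem LinearMap.seminorm_apply₂_le_mul (β : E₁ →ₗ[ℝ] E₂ →ₗ[ℝ] F) {q : Seminorm ℝ F}
    {P : Seminorm ℝ E₁} {Q : Seminorm ℝ E₂}
    (h : ∀ x y, P x < 1 → Q y < 1 → q (β x y) ≤ 1) (x : E₁) (y : E₂) :
    q (β x y) ≤ P x * Q y := by
  refine le_mul_of_forall_lt₀ fun t ht s hs => ?_
  have ht₀ : 0 < t := (apply_nonneg P x).trans_lt ht
  have hs₀ : 0 < s := (apply_nonneg Q y).trans_lt hs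
  have hx : P (t⁻¹ • x) < 1 := by
    rw [map_smul_eq_mul, norm_inv, Real.norm_of_nonneg ht₀.le, inv_mul_lt_one₀ ht₀]
    exact ht
  have hy : Q (s⁻¹ • y) < 1 := by
    rw [map_smul_eq_mul, norm_inv, Real.norm_of_nonneg hs₀.le, inv_mul_lt_one₀ hs₀]
    exact hs
  have hscale : q (β (t⁻¹ • x) (s⁻¹ • y)) = (t * s)⁻¹ * q (β x y) := by
    simp only [map_smul, LinearMap.smul_apply, map_smul_eq_mul, norm_inv,
      Real.norm_of_nonneg ht₀.le, Real.norm_of_nonneg hs₀.le, mul_inv]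
    ring
  rw [← inv_mul_le_one₀ (mul_pos ht₀ hs₀), ← hscale]
  exact h _ _ hx hy

variable [TopologicalSpace E₁] [IsTopologicalAddGroup E₁] [ContinuousSMul ℝ E₁]
  [LocallyConvexSpace ℝ E₁] [TopologicalSpace E₂] [IsTopologicalAddGroup E₂]
  [ContinuousSMul ℝ E₂] [LocallyConvexSpace ℝ E₂] [TopologicalSpace F]

theorem LinearMap.exists_continuous_seminorm_apply₂_le_mul (β : E₁ →ₗ[ℝ] E₂ →ₗ[ℝ] F)
    (hβ : Continuous fun xy : E₁ × E₂ => β xy.1 xy.2) {q : Seminorm ℝ F} (hq : Continuous q) :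
    ∃ (P : Seminorm ℝ E₁) (Q : Seminorm ℝ E₂), Continuous P ∧ Continuous Q ∧
      ∀ x y, q (β x y) ≤ P x * Q y := by
  have hball : {xy : E₁ × E₂ | q (β xy.1 xy.2) < 1} ∈ 𝓝 0 :=
    (isOpen_lt (hq.comp hβ) continuous_const).mem_nhds (by simp)
  rw [Prod.zero_eq_mk, nhds_prod_eq, mem_prod_iff] at hball
  obtain ⟨U, hU, V, hV, hUV⟩ := hball
  obtain ⟨P, hP, hPU⟩ := Seminorm.exists_continuous_ball_subset hU
  obtain ⟨Q, hQ, hQV⟩ := Seminorm.exists_continuous_ball_subset hV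
  refine ⟨P, Q, hP, hQ, β.seminorm_apply₂_le_mul fun x y hx hy => le_of_lt ?_⟩
  exact hUV (Set.mk_mem_prod (hPU ((P.mem_ball_zero).2 hx)) (hQV ((Q.mem_ball_zero).2 hy)))

end Bilinear

theorem productEstimates_of_cnp_codomain_general {E₁ E₂ F : Type*}
    [AddCommGroup E₁] [Module ℝ E₁] [TopologicalSpace E₁]
    [IsTopologicalAddGroup E₁] [ContinuousSMul ℝ E₁] [LocallyConvexSpace ℝ E₁]
    [AddCommGroup E₂] [Module ℝ E₂] [TopologicalSpace E₂]
    [IsTopologicalAddGroup E₂] [ContinuousSMul ℝ E₂] [LocallyConvexSpace ℝ E₂]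
    [AddCommGroup F] [Module ℝ F] [TopologicalSpace F]
    (β : E₁ →ₗ[ℝ] E₂ →ₗ[ℝ] F)
    (hβ : Continuous (fun xy : E₁ × E₂ => β xy.1 xy.2))
    (hF : CountableNeighbourhoodProperty F) :
    ProductEstimates (fun x y => β x y) := by
  intro p hp
  obtain ⟨q, hq, hpq⟩ := hF (fun n => p n.unpair.1 n.unpair.2) fun n => hp _ _
  choose C hC₀ hC using hpq
  obtain ⟨P, Q, hP, hQ, hPQ⟩ := β.exists_continuous_seminorm_apply₂_le_mul hβ hq
  obtain ⟨M, hM⟩ := exists_nnreal_le_mul fun i j => C (Nat.pair i j)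
  refine ⟨fun i => M i • P, fun j => M j • Q, fun i => hP.const_smul (M i),
    fun j => hQ.const_smul (M j), fun i j x y => ?_⟩
  have hp_le : p i j (β x y) ≤ C (Nat.pair i j) * q (β x y) := by
    simpa using hC (Nat.pair i j) (β x y)
  calc p i j (β x y) ≤ C (Nat.pair i j) * (P x * Q y) :=
        hp_le.trans (mul_le_mul_of_nonneg_left (hPQ x y) (hC₀ _).le)
    _ ≤ (M i * M j) * (P x * Q y) :=
        mul_le_mul_of_nonneg_right (hM i j) (mul_nonneg (apply_nonneg P x) (apply_nonneg Q y))
    _ = (M i • P) x * (M j • Q) y := by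
        simp only [smul_apply, NNReal.smul_def, smul_eq_mul]
        ring

/-- If `F` has the countable neighbourhood property, then every continuous bilinear map
`β : E₁ × E₂ → F` between locally convex spaces admits product estimates. -/
theorem productEstimates_of_cnp_codomain {E₁ E₂ F : Type*}
    [AddCommGroup E₁] [Module ℝ E₁] [TopologicalSpace E₁]
    [IsTopologicalAddGroup E₁] [ContinuousSMul ℝ E₁] [LocallyConvexSpace ℝ E₁] [T2Space E₁]
    [AddCommGroup E₂] [Module ℝ E₂] [TopologicalSpace E₂]
    [IsTopologicalAddGroup E₂] [ContinuousSMul ℝ E₂] [LocallyConvexSpace ℝ E₂] [T2Space E₂]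
    [AddCommGroup F] [Module ℝ F] [TopologicalSpace F]
    [IsTopologicalAddGroup F] [ContinuousSMul ℝ F] [LocallyConvexSpace ℝ F] [T2Space F]
    (β : E₁ →ₗ[ℝ] E₂ →ₗ[ℝ] F)
    (hβ : Continuous (fun xy : E₁ × E₂ => β xy.1 xy.2))
    (hF : CountableNeighbourhoodProperty F) :
    ProductEstimates (fun x y => β x y) :=
  productEstimates_of_cnp_codomain_general β hβ hF
end

section
/- Every continuous bilinear map β : E₁ × E₂ → F from a product of normed spaces into a locally convex space admits product estimates. -/
open NNReal Finset Topology

theorem NNReal.exists_forall_le_mul (C : ℕ → ℕ → ℝ≥0) :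
    ∃ a : ℕ → ℝ≥0, ∀ i j, C i j ≤ a i * a j := by
  set a : ℕ → ℝ≥0 := fun n => 1 + ∑ kl ∈ range (n + 1) ×ˢ range (n + 1), C kl.1 kl.2
  refine ⟨a, fun i j => ?_⟩
  have hC : C i j ≤ a (max i j) :=
    (single_le_sum (f := fun kl : ℕ × ℕ => C kl.1 kl.2) (a := (i, j)) (fun _ _ => zero_le)
      (mem_product.2 ⟨mem_range.2 (by omega), mem_range.2 (by omega)⟩)).trans le_add_self
  have ha : ∀ n, 1 ≤ a n := fun n => le_self_add
  rcases max_choice i j with h | h <;> rw [h] at hC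
  · exact hC.trans (le_mul_of_one_le_right' (ha j))
  · exact hC.trans (le_mul_of_one_le_left' (ha i))

namespace Seminorm

variable {E₁ E₂ F : Type*}
  [NormedAddCommGroup E₁] [NormedSpace ℝ E₁]
  [NormedAddCommGroup E₂] [NormedSpace ℝ E₂]
  [AddCommGroup F] [Module ℝ F]

theorem map_bilinear_mul_sq_le_norm_mul_norm (q : Seminorm ℝ F) (β : E₁ →ₗ[ℝ] E₂ →ₗ[ℝ] F)
    {r : ℝ} (hr : 0 < r) (h : ∀ x y, ‖x‖ ≤ r → ‖y‖ ≤ r → q (β x y) ≤ 1) (x : E₁) (y : E₂) :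
    q (β x y) * r ^ 2 ≤ ‖x‖ * ‖y‖ := by
  rcases eq_or_ne x 0 with rfl | hx
  · simp
  rcases eq_or_ne y 0 with rfl | hy
  · simp
  have hx' : ‖(r / ‖x‖) • x‖ = r := by
    rw [norm_smul, Real.norm_of_nonneg (by positivity), div_mul_cancel₀ _ (norm_ne_zero_iff.2 hx)]
  have hy' : ‖(r / ‖y‖) • y‖ = r := by
    rw [norm_smul, Real.norm_of_nonneg (by positivity), div_mul_cancel₀ _ (norm_ne_zero_iff.2 hy)]
  have hrescaled := h _ _ hx'.le hy'.le
  simp only [map_smul, LinearMap.smul_apply, map_smul_eq_mul, Real.norm_eq_abs,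
    abs_of_pos (show 0 < r / ‖x‖ by positivity),
    abs_of_pos (show 0 < r / ‖y‖ by positivity)] at hrescaled
  rw [← div_le_one (by positivity)]
  exact (le_of_eq (by ring)).trans hrescaled

theorem exists_bound_map_bilinear_of_continuous [TopologicalSpace F] (q : Seminorm ℝ F)
    (hq : Continuous q) (β : E₁ →ₗ[ℝ] E₂ →ₗ[ℝ] F)
    (hβ : Continuous (fun xy : E₁ × E₂ => β xy.1 xy.2)) :
    ∃ C : ℝ≥0, ∀ x y, q (β x y) ≤ C * (‖x‖ * ‖y‖) := by
  have hnear : ∀ᶠ xy in 𝓝 ((0 : E₁), (0 : E₂)), q (β xy.1 xy.2) ≤ 1 :=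
    ((hq.comp hβ).tendsto _).eventually (Iic_mem_nhds (by simp))
  obtain ⟨r, hr, hball⟩ := Metric.nhds_basis_closedBall.eventually_iff.1 hnear
  have hbound := q.map_bilinear_mul_sq_le_norm_mul_norm β hr fun x y hx hy =>
    hball (x := (x, y)) (mem_closedBall_zero_iff.2 (norm_prod_le_iff.2 ⟨hx, hy⟩))
  refine ⟨(r ^ 2)⁻¹.toNNReal, fun x y => ?_⟩
  rw [Real.coe_toNNReal _ (by positivity), inv_mul_eq_div, le_div_iff₀ (by positivity)]
  exact hbound x y

end Seminorm

theorem productEstimates_of_normed_domains_general {E₁ E₂ F : Type*}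
    [NormedAddCommGroup E₁] [NormedSpace ℝ E₁]
    [NormedAddCommGroup E₂] [NormedSpace ℝ E₂]
    [AddCommGroup F] [Module ℝ F] [TopologicalSpace F]
    (β : E₁ →ₗ[ℝ] E₂ →ₗ[ℝ] F)
    (hβ : Continuous (fun xy : E₁ × E₂ => β xy.1 xy.2)) :
    ProductEstimates (fun x y => β x y) := by
  intro p hp
  choose C hC using fun i j => (p i j).exists_bound_map_bilinear_of_continuous (hp i j) β hβ
  obtain ⟨a, ha⟩ := NNReal.exists_forall_le_mul C
  refine ⟨fun i => a i • normSeminorm ℝ E₁, fun j => a j • normSeminorm ℝ E₂,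
    fun i => continuous_norm.const_smul (a i), fun j => continuous_norm.const_smul (a j),
    fun i j x y => ?_⟩
  calc p i j (β x y) ≤ C i j * (‖x‖ * ‖y‖) := hC i j x y
    _ ≤ a i * a j * (‖x‖ * ‖y‖) := by gcongr; exact_mod_cast ha i j
    _ = (a i • normSeminorm ℝ E₁) x * (a j • normSeminorm ℝ E₂) y := by
      simp only [smul_apply, coe_normSeminorm, NNReal.smul_def, smul_eq_mul]
      ring

/-- Every continuous bilinear map from a product of normed spaces into a locally convex
space admits product estimates. -/
theorem productEstimates_of_normed_domains {E₁ E₂ F : Type*}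
    [NormedAddCommGroup E₁] [NormedSpace ℝ E₁]
    [NormedAddCommGroup E₂] [NormedSpace ℝ E₂]
    [AddCommGroup F] [Module ℝ F] [TopologicalSpace F]
    [IsTopologicalAddGroup F] [ContinuousSMul ℝ F] [LocallyConvexSpace ℝ F] [T2Space F]
    (β : E₁ →ₗ[ℝ] E₂ →ₗ[ℝ] F)
    (hβ : Continuous (fun xy : E₁ × E₂ => β xy.1 xy.2)) :
    ProductEstimates (fun x y => β x y) :=
  productEstimates_of_normed_domains_general β hβ
end

section
/- The pointwise multiplication map β : ℝ^ℕ × ℝ^ℕ → ℝ^ℕ, β((x_i),(y_i)) = (x_i·y_i), on the Fréchet space ℝ^ℕ with the product topology, is continuous and bilinear but does not admit product estimates. -/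
/-!
A continuous seminorm on `ℝ^ℕ` is dominated by some `C ‖·‖_n`, so it vanishes on the unit
vector `e_j` for every `j > n`. Testing product estimates against the coordinate seminorms
`p i j z = |z j|` then gives `1 = |(e_j e_j) j| ≤ P 0 e_j * Q j e_j = 0`.
-/

theorem Seminorm.exists_finset_eq_zero_of_continuous_pi {𝕜 ι : Type*}
    [NontriviallyNormedField 𝕜] {E : ι → Type*} [∀ i, SeminormedAddCommGroup (E i)]
    [∀ i, NormedSpace 𝕜 (E i)] (q : Seminorm 𝕜 (∀ i, E i)) (hq : Continuous q) :
    ∃ s : Finset ι, ∀ x, (∀ i ∈ s, x i = 0) → q x = 0 := by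
  classical
  let coord : SeminormFamily 𝕜 (∀ i, E i) ((_ : ι) × Fin 1) :=
    SeminormFamily.sigma fun i ↦
      SeminormFamily.comp (fun _ ↦ normSeminorm 𝕜 (E i)) (LinearMap.proj i)
  obtain ⟨s, C, -, hqC⟩ := bound_of_continuous (p := coord)
    (withSeminorms_pi fun i ↦ norm_withSeminorms 𝕜 (E i)) q hq
  refine ⟨s.image Sigma.fst, fun x hx ↦ le_antisymm ?_ (apply_nonneg q x)⟩
  have hsup : s.sup coord x ≤ 0 := finset_sup_apply_le le_rfl fun k hk ↦ by
    simp [coord, SeminormFamily.sigma, SeminormFamily.comp_apply,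
      hx k.1 (Finset.mem_image_of_mem _ hk)]
  calc q x ≤ C * s.sup coord x := hqC x
    _ ≤ 0 := mul_nonpos_of_nonneg_of_nonpos C.2 hsup

theorem not_productEstimates_pi_mul {ι : Type*} [Infinite ι] :
    ¬ ProductEstimates (fun x y : ι → ℝ ↦ x * y) := by
  classical
  intro h
  let f := Infinite.natEmbedding ι
  let coord : ℕ → ℕ → Seminorm ℝ (ι → ℝ) := fun _ n ↦
    (normSeminorm ℝ ℝ).comp (LinearMap.proj (f n))
  obtain ⟨P, Q, hP, -, hPQ⟩ := h coord fun _ n ↦ (continuous_apply (f n)).norm (E := ℝ)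
  obtain ⟨s, hs⟩ := (P 0).exists_finset_eq_zero_of_continuous_pi (hP 0)
  obtain ⟨n, hn⟩ := Infinite.exists_notMem_finset (s.preimage f f.injective.injOn)
  let e : ι → ℝ := Pi.single (f n) 1
  have hPe : P 0 e = 0 := hs e fun i hi ↦
    Pi.single_eq_of_ne (fun h ↦ hn (Finset.mem_preimage.2 (by rwa [← h]))) 1
  have hee : coord 0 n (e * e) = 1 := by simp [coord, e]
  have hcontra := hPQ 0 n e e
  norm_num [hee, hPe] at hcontra

/-- Pointwise multiplication `ℝ^ℕ × ℝ^ℕ → ℝ^ℕ` (with the product topology on `ℝ^ℕ`)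
is a continuous bilinear map which does not admit product estimates. -/
theorem pointwiseMul_continuous_not_productEstimates :
    Continuous (fun xy : (ℕ → ℝ) × (ℕ → ℝ) => xy.1 * xy.2) ∧
      ¬ ProductEstimates (fun x y : ℕ → ℝ => x * y) :=
  ⟨continuous_mul, not_productEstimates_pi_mul⟩
end

section
/- The pointwise multiplication map β : C^∞[0,1] × C^∞[0,1] → C^∞[0,1] is continuous and bilinear but does not admit product estimates. -/
/-- The space `C^∞[0,1]`, modelled as the space of smooth real functions, carrying the
topology defined by the seminorms `γ ↦ max_{0 ≤ j ≤ k} sup_{x ∈ [0,1]} |γ⁽ʲ⁾(x)|`. -/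
def SmoothFn : Submodule ℝ (ℝ → ℝ) where
  carrier := {f | ContDiff ℝ (⊤ : ℕ∞) f}
  add_mem' {a b} hf hg :=
    ContDiff.add (show ContDiff ℝ (⊤ : ℕ∞) a from hf) (show ContDiff ℝ (⊤ : ℕ∞) b from hg)
  zero_mem' := show ContDiff ℝ (⊤ : ℕ∞) _ from contDiff_const
  smul_mem' c f hf := ContDiff.const_smul c (show ContDiff ℝ (⊤ : ℕ∞) f from hf)

/-- The `k`-th derivative of a smooth function, restricted to `[0,1]`, as a continuous
map; these maps induce the `C^k`-seminorm topologies. -/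
theorem SmoothFn.contDiff (f : SmoothFn) : ContDiff ℝ (⊤ : ℕ∞) f.1 := f.2

noncomputable def derivRestrict (k : ℕ) (f : SmoothFn) : C(Set.Icc (0 : ℝ) 1, ℝ) :=
  ⟨fun x => iteratedDeriv k f.1 x,
    ((SmoothFn.contDiff f).continuous_iteratedDeriv k (by exact_mod_cast le_top)).comp continuous_subtype_val⟩

/-- The topology of `C^∞[0,1]`: the initial topology with respect to the maps sending a
smooth function to its `k`-th derivative, viewed in `C([0,1],ℝ)` with the uniform
topology; equivalently, the topology defined by the seminorms `‖·‖_{C^k}`. -/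
noncomputable instance smoothFnTopology : TopologicalSpace SmoothFn :=
  ⨅ k : ℕ, TopologicalSpace.induced (derivRestrict k) inferInstance

/-! Continuity of multiplication follows from the Leibniz rule. Product estimates fail on the
exponentials `e_a(x) = exp(a x)`: for `p i j = ‖(·)⁽ʲ⁾‖_∞`, the continuous seminorm `P 0` is
dominated by some `C ‖·‖_{C^K}`, so for every `a ≥ 1`
`(a+1)^(K+1) e^(a+1) = ‖(e_a e_1)⁽ᴷ⁺¹⁾‖_∞ ≤ C ‖e_a‖_{C^K} Q_{K+1}(e_1) ≤ C a^K e^a Q_{K+1}(e_1)`,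
which fails for large `a`: the extra derivative gains a factor `a` that no fixed seminorm of
`e_a` can absorb. -/

open Set

theorem ProductEstimates.exists_continuous_seminorm_forall_le {E₁ E₂ F : Type*}
    [AddCommGroup E₁] [Module ℝ E₁] [TopologicalSpace E₁]
    [AddCommGroup E₂] [Module ℝ E₂] [TopologicalSpace E₂]
    [AddCommGroup F] [Module ℝ F] [TopologicalSpace F]
    {β : E₁ → E₂ → F} (h : ProductEstimates β) (r : ℕ → Seminorm ℝ F)
    (hr : ∀ j, Continuous (r j)) :
    ∃ P : Seminorm ℝ E₁, Continuous P ∧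
      ∃ Q : ℕ → Seminorm ℝ E₂, ∀ j x y, r j (β x y) ≤ P x * Q j y := by
  obtain ⟨P, Q, hP, -, hPQ⟩ := h (fun _ j => r j) fun _ j => hr j
  exact ⟨P 0, hP 0, Q, hPQ 0⟩

theorem Real.exists_mul_pow_mul_exp_lt (D : ℝ) (K : ℕ) :
    ∃ a : ℝ, 1 ≤ a ∧ D * (a ^ K * Real.exp a) < (a + 1) ^ (K + 1) * Real.exp (a + 1) := by
  set a := max 1 D + 1
  have ha : 1 ≤ a := by linarith [le_max_left 1 D]
  have hDa : D < a := by linarith [le_max_right 1 D]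
  refine ⟨a, ha, ?_⟩
  calc D * (a ^ K * Real.exp a) < a * (a ^ K * Real.exp a) := by gcongr
    _ = a ^ (K + 1) * Real.exp a := by ring
    _ ≤ (a + 1) ^ (K + 1) * Real.exp (a + 1) := by gcongr <;> linarith

namespace SmoothFn

theorem contDiff_nat (f : SmoothFn) (k : ℕ) : ContDiff ℝ k f.1 :=
  (SmoothFn.contDiff f).of_le (by exact_mod_cast le_top)

noncomputable def mul (f g : SmoothFn) : SmoothFn :=
  ⟨f.1 * g.1, (SmoothFn.contDiff f).mul (SmoothFn.contDiff g)⟩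

@[fun_prop]
theorem continuous_derivRestrict (k : ℕ) : Continuous (derivRestrict k) :=
  continuous_iInf_dom continuous_induced_dom

theorem derivRestrict_mul (k : ℕ) (f g : SmoothFn) :
    derivRestrict k (mul f g) = ∑ i ∈ Finset.range (k + 1),
      (k.choose i : ℝ) • (derivRestrict i f * derivRestrict (k - i) g) := by
  ext x
  simp [derivRestrict, mul, iteratedDeriv_mul (contDiff_nat f k).contDiffAt
    (contDiff_nat g k).contDiffAt, mul_assoc]

theorem continuous_mul : Continuous fun fg : SmoothFn × SmoothFn => mul fg.1 fg.2 := by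
  refine continuous_iInf_rng.mpr fun k => continuous_induced_rng.mpr ?_
  simp only [Function.comp_def, derivRestrict_mul]
  fun_prop

noncomputable def derivRestrictₗ (k : ℕ) : SmoothFn →ₗ[ℝ] C(Icc (0 : ℝ) 1, ℝ) where
  toFun := derivRestrict k
  map_add' f g := by
    ext x
    exact iteratedDeriv_add (contDiff_nat f k).contDiffAt (contDiff_nat g k).contDiffAt
  map_smul' c f := by
    ext x
    exact iteratedDeriv_const_smul (contDiff_nat f k).contDiffAt c

noncomputable def derivSeminorm (k : ℕ) : Seminorm ℝ SmoothFn :=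
  (normSeminorm ℝ C(Icc (0 : ℝ) 1, ℝ)).comp (derivRestrictₗ k)

noncomputable def ckSeminorm (k : ℕ) : Seminorm ℝ SmoothFn :=
  (Finset.range (k + 1)).sup derivSeminorm

theorem derivSeminorm_apply (k : ℕ) (f : SmoothFn) : derivSeminorm k f = ‖derivRestrict k f‖ :=
  rfl

theorem continuous_derivSeminorm (k : ℕ) : Continuous (derivSeminorm k) :=
  (continuous_derivRestrict k).norm

theorem withSeminorms_derivSeminorm :
    WithSeminorms (SeminormFamily.sigma fun k (_ : Fin 1) => derivSeminorm k) :=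
  withSeminorms_iInf fun k => (derivRestrictₗ k).withSeminorms_induced (norm_withSeminorms ℝ _)

theorem exists_le_smul_ckSeminorm (q : Seminorm ℝ SmoothFn) (hq : Continuous q) :
    ∃ (K : ℕ) (C : NNReal), q ≤ C • ckSeminorm K := by
  obtain ⟨s, C, -, hq_le⟩ := Seminorm.bound_of_continuous withSeminorms_derivSeminorm q hq
  refine ⟨s.sup Sigma.fst, C, hq_le.trans (IsOrderedSMul.smul_le_smul le_rfl ?_)⟩
  exact Finset.sup_le fun i hi => Finset.le_sup (f := derivSeminorm)
    (Finset.mem_range_succ_iff.mpr (Finset.le_sup (f := Sigma.fst) hi))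

noncomputable def expMul (a : ℝ) : SmoothFn :=
  ⟨fun x => Real.exp (a * x),
    show ContDiff ℝ (⊤ : ℕ∞) _ from Real.contDiff_exp.comp (contDiff_const.mul contDiff_id)⟩

theorem mul_expMul (a b : ℝ) : mul (expMul a) (expMul b) = expMul (a + b) := by
  ext x
  simp only [mul, expMul, Pi.mul_apply, ← Real.exp_add, add_mul]

theorem derivSeminorm_expMul (k : ℕ) {a : ℝ} (ha : 0 ≤ a) :
    derivSeminorm k (expMul a) = a ^ k * Real.exp a := by
  have hval (x : Icc (0 : ℝ) 1) : derivRestrict k (expMul a) x = a ^ k * Real.exp (a * x) := by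
    simp [derivRestrict, expMul]
  rw [derivSeminorm_apply]
  refine le_antisymm ((ContinuousMap.norm_le _ (by positivity)).mpr fun x => ?_) ?_
  · rw [hval, Real.norm_of_nonneg (by positivity)]
    gcongr
    exact mul_le_of_le_one_right ha x.2.2
  · simpa [hval, abs_of_nonneg ha] using
      ContinuousMap.norm_coe_le_norm (derivRestrict k (expMul a)) ⟨1, by simp⟩

theorem ckSeminorm_expMul_le (k : ℕ) {a : ℝ} (ha : 1 ≤ a) :
    ckSeminorm k (expMul a) ≤ a ^ k * Real.exp a :=
  Seminorm.finset_sup_apply_le (by positivity) fun j hj => by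
    rw [derivSeminorm_expMul j (by linarith)]
    gcongr
    exact Finset.mem_range_succ_iff.mp hj

theorem not_productEstimates_mul : ¬ ProductEstimates mul := by
  intro h
  obtain ⟨P, hP, Q, hPQ⟩ := h.exists_continuous_seminorm_forall_le derivSeminorm
    continuous_derivSeminorm
  obtain ⟨K, C, hPC⟩ := exists_le_smul_ckSeminorm P hP
  set D := Q (K + 1) (expMul 1)
  obtain ⟨a, ha, hlt⟩ := Real.exists_mul_pow_mul_exp_lt (C * D) K
  refine hlt.not_ge ?_
  calc (a + 1) ^ (K + 1) * Real.exp (a + 1)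
      = derivSeminorm (K + 1) (mul (expMul a) (expMul 1)) := by
        rw [mul_expMul, derivSeminorm_expMul _ (by linarith)]
    _ ≤ P (expMul a) * D := hPQ _ _ _
    _ ≤ C * ckSeminorm K (expMul a) * D := by gcongr; exact hPC _
    _ ≤ C * (a ^ K * Real.exp a) * D := by gcongr; exact ckSeminorm_expMul_le K ha
    _ = C * D * (a ^ K * Real.exp a) := by ring

end SmoothFn

/-- Pointwise multiplication on `C^∞[0,1]` is a continuous bilinear map which does not
admit product estimates. -/
theorem smoothFn_mul_continuous_not_productEstimates :
    Continuous (fun fg : SmoothFn × SmoothFn =>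
      (⟨fg.1.1 * fg.2.1, (SmoothFn.contDiff fg.1).mul (SmoothFn.contDiff fg.2)⟩ : SmoothFn)) ∧
      ¬ ProductEstimates (fun f g : SmoothFn =>
        (⟨f.1 * g.1, (SmoothFn.contDiff f).mul (SmoothFn.contDiff g)⟩ : SmoothFn)) :=
  ⟨SmoothFn.continuous_mul, SmoothFn.not_productEstimates_mul⟩
end

section
/- Let M be a paracompact, locally compact, non-compact Hausdorff topological space and let (V_j)_{j∈J} be a locally finite cover of M by relatively compact, open, non-empty subsets. Then the compact covering number θ(M) (the smallest cardinality of a cover of M by compact sets) equals |J|. -/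
universe u

/-- The *compact covering number* `θ(M)` of a topological space: the smallest
cardinality of a cover of `M` by compact subsets. -/
noncomputable def compactCoveringNumber (M : Type u) [TopologicalSpace M] : Cardinal.{u} :=
  sInf {c : Cardinal.{u} | ∃ S : Set (Set M),
    (∀ K ∈ S, IsCompact K) ∧ ⋃₀ S = Set.univ ∧ Cardinal.mk S = c}

/-!
A cover of a non-compact space by compact sets is infinite. Each compact set meets only finitely
many members of a locally finite family, and each nonempty member meets some set of a given
compact cover `S`, so `#J ≤ #S * ℵ₀ = #S`. Conversely the closures `closure (V j)` form a compact
cover indexed by `J`.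
-/

open Set
open scoped Cardinal

section CompactCover

variable {M : Type u} [TopologicalSpace M]

theorem compactCoveringNumber_le_mk {S : Set (Set M)} (hS : ∀ K ∈ S, IsCompact K)
    (hcov : ⋃₀ S = univ) : compactCoveringNumber M ≤ #S :=
  csInf_le' ⟨S, hS, hcov, rfl⟩

theorem exists_compact_cover_mk_eq_compactCoveringNumber
    (h : ∃ S : Set (Set M), (∀ K ∈ S, IsCompact K) ∧ ⋃₀ S = univ) :
    ∃ S : Set (Set M), (∀ K ∈ S, IsCompact K) ∧ ⋃₀ S = univ ∧
      #S = compactCoveringNumber M := by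
  obtain ⟨S, hS, hcov⟩ := h
  exact csInf_mem (s := {c | ∃ S : Set (Set M), (∀ K ∈ S, IsCompact K) ∧ ⋃₀ S = univ ∧ #S = c})
    ⟨#S, S, hS, hcov, rfl⟩

theorem infinite_of_isCompact_of_sUnion_eq_univ (hM : ¬CompactSpace M) {S : Set (Set M)}
    (hS : ∀ K ∈ S, IsCompact K) (hcov : ⋃₀ S = univ) : S.Infinite := fun hfin =>
  hM <| isCompact_univ_iff.mp (hcov ▸ hfin.isCompact_sUnion hS)

theorem LocallyFinite.mk_le_mk_mul_aleph0 {ι : Type u} {V : ι → Set M} (hlf : LocallyFinite V)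
    (hne : ∀ i, (V i).Nonempty) {S : Set (Set M)} (hS : ∀ K ∈ S, IsCompact K)
    (hcov : ⋃₀ S = univ) : #ι ≤ #S * ℵ₀ := by
  have hunion : ⋃ K : S, {i | (V i ∩ K).Nonempty} = univ := by
    refine eq_univ_of_forall fun i => ?_
    obtain ⟨x, hx⟩ := hne i
    obtain ⟨K, hKS, hxK⟩ : x ∈ ⋃₀ S := hcov ▸ mem_univ x
    exact mem_iUnion.mpr ⟨⟨K, hKS⟩, x, hx, hxK⟩
  calc #ι = #(⋃ K : S, {i | (V i ∩ K).Nonempty}) := by rw [hunion, Cardinal.mk_univ]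
    _ ≤ #S * ⨆ K : S, #{i | (V i ∩ K).Nonempty} := Cardinal.mk_iUnion_le _
    _ ≤ #S * ℵ₀ := by
      gcongr
      exact ciSup_le' fun K => (hlf.finite_nonempty_inter_compact (hS K K.2)).lt_aleph0.le

end CompactCover

theorem compactCoveringNumber_eq_of_locallyFinite_cover_general {M : Type u} [TopologicalSpace M]
    (hM : ¬ CompactSpace M)
    {J : Type u} (V : J → Set M) (hlf : LocallyFinite V)
    (hne : ∀ j, (V j).Nonempty)
    (hrc : ∀ j, IsCompact (closure (V j)))
    (hcov : ⋃ j, V j = Set.univ) :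
    compactCoveringNumber M = Cardinal.mk J := by
  have hclosures : (∀ K ∈ range fun j => closure (V j), IsCompact K) ∧
      ⋃₀ range (fun j => closure (V j)) = univ := by
    refine ⟨forall_mem_range.mpr hrc, eq_univ_of_univ_subset ?_⟩
    rw [sUnion_range, ← hcov]
    exact iUnion_mono fun j => subset_closure
  obtain ⟨S, hS, hScov, hSθ⟩ := exists_compact_cover_mk_eq_compactCoveringNumber ⟨_, hclosures⟩
  refine le_antisymm
    ((compactCoveringNumber_le_mk hclosures.1 hclosures.2).trans Cardinal.mk_range_le) ?_
  have hSinf := (infinite_of_isCompact_of_sUnion_eq_univ hM hS hScov).to_subtype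
  calc #J ≤ #S * ℵ₀ := hlf.mk_le_mk_mul_aleph0 hne hS hScov
    _ = compactCoveringNumber M := by rw [Cardinal.mul_aleph0_eq (Cardinal.aleph0_le_mk S), hSθ]

/-- If `M` is a paracompact, locally compact, non-compact Hausdorff space and
`(V j)_{j ∈ J}` is a locally finite cover of `M` by relatively compact, open, non-empty
sets, then the compact covering number of `M` equals `#J`. -/
theorem compactCoveringNumber_eq_of_locallyFinite_cover {M : Type u} [TopologicalSpace M]
    [T2Space M] [ParacompactSpace M] [LocallyCompactSpace M] (hM : ¬ CompactSpace M)
    {J : Type u} (V : J → Set M) (hlf : LocallyFinite V)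
    (hopen : ∀ j, IsOpen (V j)) (hne : ∀ j, (V j).Nonempty)
    (hrc : ∀ j, IsCompact (closure (V j)))
    (hcov : ⋃ j, V j = Set.univ) :
    compactCoveringNumber M = Cardinal.mk J :=
  compactCoveringNumber_eq_of_locallyFinite_cover_general hM V hlf hne hrc hcov
end

section
/- Let (E_i)_{i∈ℕ} and (F_j)_{j∈ℕ} be sequences of locally convex spaces, H a locally convex space, and β_{i,j} : E_i × F_j → H continuous bilinear maps. Assume that for every double sequence (P_{σ,τ})_{σ,τ∈ℕ} of continuous seminorms on H there exist continuous seminorms P_{i,σ} on E_i, Q_{j,τ} on F_j, and constants C_{i,j,σ,τ} > 0 such that P_{σ,τ}(β_{i,j}(x,y)) ≤ C_{i,j,σ,τ} P_{i,σ}(x) Q_{j,τ}(y) for all i,j,σ,τ and x ∈ E_i, y ∈ F_j. Then the bilinear map β : (⊕_{i∈ℕ} E_i) × (⊕_{j∈ℕ} F_j) → H sending ((x_i),(y_j)) to Σ_{i,j} β_{i,j}(x_i,y_j) admits product estimates. -/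
/-!
Choose weights `c (i, σ) ≥ 0` with `C i j σ τ ≤ c (i, σ) * c (j, τ)` (Bisgaard's lemma; over `ℕ`
take `c n = 1 + Σ_{k, l ≤ n} |D k l|`, which is monotone and `≥ 1`, so that
`D n m ≤ c (max n m) ≤ c n * c m`). The weighted sums `x ↦ Σᵢ c (i, σ) PP i σ (xᵢ)` are continuous
seminorms on the direct sum, and the triangle inequality applied to `β x y = Σᵢ Σⱼ B i j xᵢ yⱼ`
bounds `p σ τ (β x y)` by their product.
-/

universe u v w

open Finset NNReal

theorem exists_le_mul_nat (D : ℕ → ℕ → ℝ) : ∃ c : ℕ → ℝ≥0, ∀ n m, D n m ≤ c n * c m := by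
  let c : ℕ → ℝ≥0 := fun n => 1 + ∑ k ∈ range (n + 1) ×ˢ range (n + 1), ‖D k.1 k.2‖₊
  have hc_one : ∀ n, 1 ≤ c n := fun _ => le_self_add
  have hc_mono : Monotone c := fun n m hnm => by
    have hsub : range (n + 1) ⊆ range (m + 1) := range_subset_range.2 (by omega)
    exact add_le_add_right (sum_le_sum_of_subset (product_subset_product hsub hsub)) 1
  refine ⟨c, fun n m => ?_⟩
  have hD : ‖D n m‖₊ ≤ c (max n m) := by
    have hmem : (n, m) ∈ range (max n m + 1) ×ˢ range (max n m + 1) := by simp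
    exact (single_le_sum (f := fun k : ℕ × ℕ => ‖D k.1 k.2‖₊) (fun _ _ => zero_le) hmem).trans
      le_add_self
  have hmax : c (max n m) ≤ c n * c m := by
    rw [hc_mono.map_max]
    exact max_le (le_mul_of_one_le_right' (hc_one m)) (le_mul_of_one_le_left' (hc_one n))
  calc D n m ≤ ‖D n m‖₊ := Real.le_norm_self _
    _ ≤ c n * c m := by exact_mod_cast hD.trans hmax

theorem exists_le_mul {ι : Type*} [Countable ι] (D : ι → ι → ℝ) :
    ∃ c : ι → ℝ≥0, ∀ a b, D a b ≤ c a * c b := by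
  obtain ⟨f, hf⟩ := Countable.exists_injective_nat ι
  obtain ⟨c, hc⟩ := exists_le_mul_nat (Function.extend f (fun a => Function.extend f (D a) 0) 0)
  exact ⟨fun a => c (f a), fun a b => by simpa only [hf.extend_apply] using hc (f a) (f b)⟩

namespace Seminorm

variable {𝕜 ι κ : Type*} [SeminormedRing 𝕜] {E : ι → Type*} {F : κ → Type*}
  [∀ i, AddCommGroup (E i)] [∀ i, Module 𝕜 (E i)] [∀ i (x : E i), Decidable (x ≠ 0)]
  [∀ j, AddCommGroup (F j)] [∀ j, Module 𝕜 (F j)] [∀ j (y : F j), Decidable (y ≠ 0)]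

noncomputable def dfinsuppSum [DecidableEq ι] (q : ∀ i, Seminorm 𝕜 (E i)) :
    Seminorm 𝕜 (Π₀ i, E i) :=
  Seminorm.of (fun x => x.sum fun i xi => q i xi)
    (fun x y => by
      have hq : ∀ s : Finset ι, ∀ i ∈ s, q i 0 = 0 := fun _ i _ => map_zero (q i)
      rw [DFinsupp.sum_of_support_subset DFinsupp.support_add (hq _),
        DFinsupp.sum_of_support_subset subset_union_left (hq _),
        DFinsupp.sum_of_support_subset subset_union_right (hq _), ← sum_add_distrib]
      exact sum_le_sum fun i _ => map_add_le_add (q i) _ _)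
    (fun a x => by
      rw [DFinsupp.sum_of_support_subset (DFinsupp.support_smul a x)
        (fun i _ => map_zero (q i)), DFinsupp.sum, mul_sum]
      simp only [DFinsupp.smul_apply, map_smul_eq_mul])

@[simp]
theorem dfinsuppSum_apply [DecidableEq ι] (q : ∀ i, Seminorm 𝕜 (E i)) (x : Π₀ i, E i) :
    dfinsuppSum q x = x.sum fun i xi => q i xi :=
  rfl

theorem map_sum_sum_le_dfinsuppSum_mul [DecidableEq ι] [DecidableEq κ] {H : Type*}
    [AddCommGroup H] [Module 𝕜 H] (p : Seminorm 𝕜 H) (P : ∀ i, Seminorm 𝕜 (E i))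
    (Q : ∀ j, Seminorm 𝕜 (F j)) (B : ∀ i j, E i → F j → H)
    (hB : ∀ i j u v, p (B i j u v) ≤ P i u * Q j v) (x : Π₀ i, E i) (y : Π₀ j, F j) :
    p (x.sum fun i xi => y.sum fun j yj => B i j xi yj) ≤ dfinsuppSum P x * dfinsuppSum Q y := by
  calc p (x.sum fun i xi => y.sum fun j yj => B i j xi yj)
      ≤ x.sum fun i xi => y.sum fun j yj => p (B i j xi yj) :=
        (le_sum_of_subadditive p (map_zero p).le (map_add_le_add p) _ _).trans
          (sum_le_sum fun i _ => le_sum_of_subadditive p (map_zero p).le (map_add_le_add p) _ _)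
    _ ≤ x.sum fun i xi => y.sum fun j yj => P i xi * Q j yj :=
        sum_le_sum fun i _ => sum_le_sum fun j _ => hB _ _ _ _
    _ = dfinsuppSum P x * dfinsuppSum Q y := by
        simp only [dfinsuppSum_apply, DFinsupp.sum, sum_mul_sum]

end Seminorm

theorem productEstimates_directSum_general
    {E : ℕ → Type v} {F : ℕ → Type w} {H : Type u}
    [∀ i, AddCommGroup (E i)] [∀ i, Module ℝ (E i)] [∀ i, TopologicalSpace (E i)]
    [∀ j, AddCommGroup (F j)] [∀ j, Module ℝ (F j)] [∀ j, TopologicalSpace (F j)]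
    [AddCommGroup H] [Module ℝ H] [TopologicalSpace H]
    [∀ i (x : E i), Decidable (x ≠ 0)] [∀ j (y : F j), Decidable (y ≠ 0)]
    [TopologicalSpace (Π₀ i, E i)] [TopologicalSpace (Π₀ j, F j)]
    (hE : ∀ P : Seminorm ℝ (Π₀ i, E i), Continuous P ↔
      ∃ q : ∀ i, Seminorm ℝ (E i), (∀ i, Continuous (q i)) ∧
        ∀ x : Π₀ i, E i, P x ≤ x.sum fun i xi => q i xi)
    (hF : ∀ Q : Seminorm ℝ (Π₀ j, F j), Continuous Q ↔
      ∃ q : ∀ j, Seminorm ℝ (F j), (∀ j, Continuous (q j)) ∧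
        ∀ y : Π₀ j, F j, Q y ≤ y.sum fun j yj => q j yj)
    (B : ∀ i j, E i →ₗ[ℝ] F j →ₗ[ℝ] H)
    (hyp : ∀ P : ℕ → ℕ → Seminorm ℝ H, (∀ σ τ, Continuous (P σ τ)) →
      ∃ (PP : ∀ i : ℕ, ℕ → Seminorm ℝ (E i)) (QQ : ∀ j : ℕ, ℕ → Seminorm ℝ (F j))
        (C : ℕ → ℕ → ℕ → ℕ → ℝ),
        (∀ i σ, Continuous (PP i σ)) ∧ (∀ j τ, Continuous (QQ j τ)) ∧
        (∀ i j σ τ, 0 < C i j σ τ) ∧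
        ∀ (i j σ τ : ℕ) (x : E i) (y : F j),
          P σ τ (B i j x y) ≤ C i j σ τ * PP i σ x * QQ j τ y) :
    ProductEstimates (fun (x : Π₀ i, E i) (y : Π₀ j, F j) =>
      x.sum fun i xi => y.sum fun j yj => B i j xi yj) := by
  intro p hp
  obtain ⟨PP, QQ, C, hPP, hQQ, -, hC⟩ := hyp p hp
  obtain ⟨c, hc⟩ := exists_le_mul fun a b : ℕ × ℕ => C a.1 b.1 a.2 b.2
  refine ⟨fun σ => Seminorm.dfinsuppSum fun i => c (i, σ) • PP i σ,
    fun τ => Seminorm.dfinsuppSum fun j => c (j, τ) • QQ j τ,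
    fun σ => (hE _).2 ⟨_, fun i => (hPP i σ).const_smul (c (i, σ)), fun _ => le_rfl⟩,
    fun τ => (hF _).2 ⟨_, fun j => (hQQ j τ).const_smul (c (j, τ)), fun _ => le_rfl⟩,
    fun σ τ => Seminorm.map_sum_sum_le_dfinsuppSum_mul _ _ _ _ fun i j u v => ?_⟩
  calc p σ τ (B i j u v) ≤ C i j σ τ * PP i σ u * QQ j τ v := hC i j σ τ u v
    _ ≤ c (i, σ) * c (j, τ) * PP i σ u * QQ j τ v := by gcongr; exact hc (i, σ) (j, τ)
    _ = (c (i, σ) • PP i σ) u * (c (j, τ) • QQ j τ) v := by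
        simp only [smul_apply, NNReal.smul_def, smul_eq_mul]; ring

/-- Lemma on locally convex direct sums (Lemma `specifsum`): given continuous bilinear
maps `B i j : E i × F j → H` such that for every double sequence `(P σ τ)` of continuous
seminorms on `H` there are continuous seminorms `PP i σ` on `E i`, `QQ j τ` on `F j` and
constants `C i j σ τ > 0` with
`P σ τ (B i j x y) ≤ C i j σ τ * PP i σ x * QQ j τ y`,
the bilinear map `β((x_i), (y_j)) = Σ_{i,j} B i j (x_i) (y_j)` on the locally convex
direct sums `⨁ᵢ E i` and `⨁ⱼ F j` admits product estimates.  Here the direct sums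
`Π₀ i, E i` carry (arbitrary) topologies whose continuous seminorms are exactly those
dominated by a sum `x ↦ Σᵢ qᵢ(xᵢ)` with all `qᵢ` continuous, as holds for the locally
convex direct sum topology on a countable direct sum. -/
theorem productEstimates_directSum
    {E : ℕ → Type v} {F : ℕ → Type w} {H : Type u}
    [∀ i, AddCommGroup (E i)] [∀ i, Module ℝ (E i)] [∀ i, TopologicalSpace (E i)]
    [∀ i, IsTopologicalAddGroup (E i)] [∀ i, ContinuousSMul ℝ (E i)]
    [∀ i, LocallyConvexSpace ℝ (E i)] [∀ i, T2Space (E i)]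
    [∀ j, AddCommGroup (F j)] [∀ j, Module ℝ (F j)] [∀ j, TopologicalSpace (F j)]
    [∀ j, IsTopologicalAddGroup (F j)] [∀ j, ContinuousSMul ℝ (F j)]
    [∀ j, LocallyConvexSpace ℝ (F j)] [∀ j, T2Space (F j)]
    [AddCommGroup H] [Module ℝ H] [TopologicalSpace H]
    [IsTopologicalAddGroup H] [ContinuousSMul ℝ H] [LocallyConvexSpace ℝ H] [T2Space H]
    [∀ i (x : E i), Decidable (x ≠ 0)] [∀ j (y : F j), Decidable (y ≠ 0)]
    [TopologicalSpace (Π₀ i, E i)] [TopologicalSpace (Π₀ j, F j)]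
    (hE : ∀ P : Seminorm ℝ (Π₀ i, E i), Continuous P ↔
      ∃ q : ∀ i, Seminorm ℝ (E i), (∀ i, Continuous (q i)) ∧
        ∀ x : Π₀ i, E i, P x ≤ x.sum fun i xi => q i xi)
    (hF : ∀ Q : Seminorm ℝ (Π₀ j, F j), Continuous Q ↔
      ∃ q : ∀ j, Seminorm ℝ (F j), (∀ j, Continuous (q j)) ∧
        ∀ y : Π₀ j, F j, Q y ≤ y.sum fun j yj => q j yj)
    (B : ∀ i j, E i →ₗ[ℝ] F j →ₗ[ℝ] H)
    (hBcont : ∀ i j, Continuous (fun xy : E i × F j => B i j xy.1 xy.2))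
    (hyp : ∀ P : ℕ → ℕ → Seminorm ℝ H, (∀ σ τ, Continuous (P σ τ)) →
      ∃ (PP : ∀ i : ℕ, ℕ → Seminorm ℝ (E i)) (QQ : ∀ j : ℕ, ℕ → Seminorm ℝ (F j))
        (C : ℕ → ℕ → ℕ → ℕ → ℝ),
        (∀ i σ, Continuous (PP i σ)) ∧ (∀ j τ, Continuous (QQ j τ)) ∧
        (∀ i j σ τ, 0 < C i j σ τ) ∧
        ∀ (i j σ τ : ℕ) (x : E i) (y : F j),
          P σ τ (B i j x y) ≤ C i j σ τ * PP i σ x * QQ j τ y) :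
    ProductEstimates (fun (x : Π₀ i, E i) (y : Π₀ j, F j) =>
      x.sum fun i xi => y.sum fun j yj => B i j xi yj) :=
  productEstimates_directSum_general hE hF B hyp
end

section
/- Let M be an uncountable set and E = ℝ^(M) be the space of finitely supported real-valued functions on M, equipped with the locally convex topology defined by the seminorms p_v(γ) = max{v(m)|γ(m)| : m ∈ M}, where v ranges over all functions v : M → [0,∞) with countable support. Then E admits no continuous norm, and every bounded subset B of E is contained in ℝ^F for some finite subset F ⊆ M. -/
open scoped ENNReal

/-- For a weight `v : M → ℝ`, the linear embedding `γ ↦ (m ↦ v m * γ m)` of the space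
`ℝ^(M)` of finitely supported functions into `ℓ^∞(M)`.  The topology induced by this map
is the topology of the seminorm `p_v(γ) = sup { v m * |γ m| : m ∈ M }`. -/
noncomputable def weightedEmbed {M : Type*} (v : M → ℝ) (γ : M →₀ ℝ) :
    lp (fun _ : M => ℝ) ∞ :=
  ⟨fun m => v m * γ m, by
    apply memℓp_infty
    have hsub : (Set.range fun m => ‖v m * γ m‖) ⊆
        insert 0 ((fun m => ‖v m * γ m‖) '' (γ.support : Set M)) := by
      rintro x ⟨m, rfl⟩
      by_cases h : γ m = 0
      · simp [h]
      · exact Set.mem_insert_of_mem _ ⟨m, Finsupp.mem_support_iff.2 h, rfl⟩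
    exact (((γ.support.finite_toSet.image _).insert 0).bddAbove).mono hsub⟩

/-- The topology on `E = ℝ^(M)`: the initial topology with respect to the maps
`γ ↦ v·γ ∈ ℓ^∞(M)` for all weights `v : M → [0,∞)` with countable support;
equivalently, the topology defined by the seminorms
`p_v(γ) = max { v m * |γ m| : m ∈ M }`. -/
noncomputable instance finsuppWeightedTopology (M : Type*) : TopologicalSpace (M →₀ ℝ) :=
  ⨅ v : {v : M → ℝ // (∀ m, 0 ≤ v m) ∧ (Function.support v).Countable},
    TopologicalSpace.induced (weightedEmbed v.1) inferInstance

/-!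
A seminorm `p_v` only sees the countable support of `v`. Hence, for uncountable `M`,
every neighbourhood of `0` contains the whole line `ℝ • single m 1` for all `m` outside a
countable set, so every continuous seminorm vanishes on some `single m 1`.

Conversely, if the supports of the elements of `B` cover infinitely many points `m₀, m₁, …`,
pick `γₖ ∈ B` with `γₖ mₖ ≠ 0` and put `v mₖ = (k + 1) / |γₖ mₖ|`: then `p_v(γₖ) ≥ k + 1`,
so `B` is not bounded.
-/

open Filter Topology Function

instance Filter.cocountable_neBot {α : Type*} [Uncountable α] : (cocountable : Filter α).NeBot :=
  ⟨fun h => not_countable <| Set.countable_univ_iff.1 <| by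
    simpa using mem_cocountable.1 (h ▸ mem_bot : ∅ ∈ cocountable)⟩

theorem Seminorm.eq_zero_of_forall_smul_lt_one {E : Type*} [AddCommGroup E] [Module ℝ E]
    (p : Seminorm ℝ E) {x : E} (h : ∀ c : ℝ, p (c • x) < 1) : p x = 0 := by
  by_contra hx
  have hpos : 0 < p x := (apply_nonneg p x).lt_of_ne' hx
  have := h (p x)⁻¹
  rw [map_smul_eq_mul, Real.norm_eq_abs, abs_inv, abs_of_pos hpos, inv_mul_cancel₀ hx] at this
  exact this.false

theorem exists_nonneg_countable_support_extension {ι M : Type*} [Countable ι] {m : ι → M}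
    (hm : Injective m) {a : ι → ℝ} (ha : ∀ i, 0 ≤ a i) :
    ∃ v : M → ℝ, (∀ x, 0 ≤ v x) ∧ (Function.support v).Countable ∧ ∀ i, v (m i) = a i := by
  refine ⟨extend m a 0, fun x => ?_, (Set.countable_range m).mono fun x hx => ?_,
    hm.extend_apply a 0⟩
  · by_cases hx : ∃ i, m i = x
    · obtain ⟨i, rfl⟩ := hx
      rw [hm.extend_apply]
      exact ha i
    · rw [extend_apply' _ _ _ hx, Pi.zero_apply]
  · by_contra hx'
    exact hx (extend_apply' _ _ _ hx')

namespace Finsupp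

variable {M : Type*}

theorem weightedEmbed_apply (v : M → ℝ) (γ : M →₀ ℝ) (m : M) :
    weightedEmbed v γ m = v m * γ m := rfl

theorem weightedEmbed_zero (v : M → ℝ) : weightedEmbed v 0 = 0 := by
  ext m
  simp [weightedEmbed_apply]

theorem weightedEmbed_add (v : M → ℝ) (γ δ : M →₀ ℝ) :
    weightedEmbed v (γ + δ) = weightedEmbed v γ + weightedEmbed v δ := by
  ext m
  simp [weightedEmbed_apply, mul_add]

theorem weightedEmbed_smul (v : M → ℝ) (c : ℝ) (γ : M →₀ ℝ) :
    weightedEmbed v (c • γ) = c • weightedEmbed v γ := by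
  ext m
  simp only [weightedEmbed_apply, lp.coeFn_smul, Pi.smul_apply, coe_smul, smul_eq_mul]
  ring

noncomputable def weightedEmbedCLM {v : M → ℝ} (hv₀ : ∀ m, 0 ≤ v m)
    (hv : (Function.support v).Countable) :
    (M →₀ ℝ) →L[ℝ] lp (fun _ : M => ℝ) ∞ where
  toFun := weightedEmbed v
  map_add' := weightedEmbed_add v
  map_smul' := weightedEmbed_smul v
  cont := continuous_iInf_dom (i := ⟨v, hv₀, hv⟩) continuous_induced_dom

theorem weightedEmbed_single_of_eq_zero {v : M → ℝ} {m : M} (hm : v m = 0) (c : ℝ) :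
    weightedEmbed v (single m c) = 0 := by
  ext x
  rw [weightedEmbed_apply, lp.coeFn_zero, Pi.zero_apply, mul_eq_zero]
  by_cases hx : x = m
  · exact .inl (hx ▸ hm)
  · exact .inr (single_eq_of_ne hx)

theorem tendsto_single_cocountable_nhds_zero :
    Tendsto (fun p : M × ℝ => single p.1 p.2) (cocountable ×ˢ ⊤) (𝓝 0) := by
  rw [nhds_iInf, tendsto_iInf]
  rintro ⟨v, -, hv⟩
  rw [nhds_induced, tendsto_comap_iff]
  refine tendsto_const_nhds.congr' ?_
  have hv' : {m | v m = 0} ∈ cocountable := mem_cocountable.2 hv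
  filter_upwards [prod_mem_prod hv' univ_mem] with p hp
  rw [comp_apply, weightedEmbed_single_of_eq_zero hp.1, weightedEmbed_zero]

theorem _root_.Seminorm.exists_single_eq_zero [Uncountable M] (N : Seminorm ℝ (M →₀ ℝ))
    (hN : Continuous N) : ∃ m, N (single m 1) = 0 := by
  have hball : ∀ᶠ γ in 𝓝 0, N γ < 1 :=
    hN.tendsto' 0 0 (map_zero N) |>.eventually_lt_const one_pos
  have : ∀ᶠ m in cocountable, ∀ c : ℝ, N (single m c) < 1 :=
    mem_prod_top.1 (tendsto_single_cocountable_nhds_zero hball)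
  obtain ⟨m, hm⟩ := this.exists
  refine ⟨m, N.eq_zero_of_forall_smul_lt_one fun c => ?_⟩
  simpa [smul_single_one] using hm c

theorem _root_.Bornology.IsVonNBounded.exists_norm_weightedEmbed_le {B : Set (M →₀ ℝ)}
    (hB : Bornology.IsVonNBounded ℝ B) {v : M → ℝ} (hv₀ : ∀ m, 0 ≤ v m)
    (hv : (Function.support v).Countable) : ∃ r, ∀ γ ∈ B, ‖weightedEmbed v γ‖ ≤ r :=
  (NormedSpace.image_isVonNBounded_iff ℝ).1 (hB.image (weightedEmbedCLM hv₀ hv))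

theorem _root_.Bornology.IsVonNBounded.finite_iUnion_support {B : Set (M →₀ ℝ)}
    (hB : Bornology.IsVonNBounded ℝ B) : (⋃ γ ∈ B, (γ.support : Set M)).Finite := by
  by_contra hinf
  let m : ℕ ↪ M := (Set.Infinite.natEmbedding _ hinf).trans (Embedding.subtype _)
  choose γ hγB hγm using fun k => Set.mem_iUnion₂.1 (Set.Infinite.natEmbedding _ hinf k).2
  have hγ : ∀ k, γ k (m k) ≠ 0 := fun k => mem_support_iff.1 (hγm k)
  obtain ⟨v, hv₀, hv, hvm⟩ := exists_nonneg_countable_support_extension m.injective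
    (a := fun k => (k + 1) / |γ k (m k)|) fun k => by positivity
  obtain ⟨r, hr⟩ := hB.exists_norm_weightedEmbed_le hv₀ hv
  obtain ⟨n, hn⟩ := exists_nat_gt r
  have hlarge : (n : ℝ) + 1 ≤ ‖weightedEmbed v (γ n)‖ := calc
    (n : ℝ) + 1 = ‖weightedEmbed v (γ n) (m n)‖ := by
      rw [weightedEmbed_apply, hvm, norm_mul, Real.norm_eq_abs, Real.norm_eq_abs, abs_div,
        abs_abs, div_mul_cancel₀ _ (abs_ne_zero.2 (hγ n)), abs_of_nonneg (by positivity)]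
    _ ≤ ‖weightedEmbed v (γ n)‖ := lp.norm_apply_le_norm ENNReal.top_ne_zero _ _
  linarith [hr _ (hγB n)]

end Finsupp

/-- For an uncountable set `M`, the space `E = ℝ^(M)` of finitely supported real
functions with the above topology admits no continuous norm, and every von
Neumann-bounded subset `B ⊆ E` is contained in `ℝ^F` for some finite `F ⊆ M`
(i.e. all elements of `B` are supported in a common finite set). -/
theorem finsupp_no_continuous_norm_and_bounded_finite_support
    (M : Type*) [Uncountable M] :
    (¬ ∃ N : Seminorm ℝ (M →₀ ℝ), Continuous N ∧ ∀ γ, N γ = 0 → γ = 0) ∧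
    ∀ B : Set (M →₀ ℝ), Bornology.IsVonNBounded ℝ B →
      ∃ s : Finset M, ∀ γ ∈ B, γ.support ⊆ s := by
  refine ⟨fun ⟨N, hN, hN0⟩ => ?_, fun B hB => ?_⟩
  · obtain ⟨m, hm⟩ := N.exists_single_eq_zero hN
    exact one_ne_zero (Finsupp.single_eq_zero.1 (hN0 _ hm))
  · have hfin := hB.finite_iUnion_support
    exact ⟨hfin.toFinset, fun γ hγ x hx => hfin.mem_toFinset.2 (Set.mem_biUnion hγ hx)⟩
end
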